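/- arXiv:1403.4197 — 2 statements merged into one kernel-verified Lean document; each statement's English description precedes it below -/
import Mathlib

section
/- Let κ > 0 and 0 < α < π/(2√κ). The function g(σ) = |log σ| + log sin_κ(σα), defined for σ ∈ (0, π/(2√κ·α)], attains a strict global minimum at σ = 1: g(σ) > g(1) = log sin_κ(α) for every σ ≠ 1 in this interval. -/
open Real MeasureTheory Filter Asymptotics

/-- Inverse hyperbolic tangent. -/
noncomputable def artanh (y : ℝ) : ℝ := Real.log ((1 + y) / (1 - y)) / 2

/-- The generalized sine function `sin_κ`. -/
noncomputable def sinK (κ t : ℝ) : ℝ :=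
  if 0 < κ then Real.sin (Real.sqrt κ * t) / Real.sqrt κ
  else if κ < 0 then Real.sinh (Real.sqrt (-κ) * t) / Real.sqrt (-κ)
  else t

/-- The generalized cosine function `cos_κ = sin_κ'`. -/
noncomputable def cosK (κ t : ℝ) : ℝ :=
  if 0 < κ then Real.cos (Real.sqrt κ * t)
  else if κ < 0 then Real.cosh (Real.sqrt (-κ) * t)
  else 1

/-- The generalized tangent function `tan_κ`. -/
noncomputable def tanK (κ t : ℝ) : ℝ := sinK κ t / cosK κ t

/-- The inverse function `arctan_κ` of `tan_κ`. -/
noncomputable def arctanK (κ x : ℝ) : ℝ :=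
  if 0 < κ then Real.arctan (Real.sqrt κ * x) / Real.sqrt κ
  else if κ < 0 then _root_.artanh (Real.sqrt (-κ) * x) / Real.sqrt (-κ)
  else x

/-- `ω_{n-1}`, the (n-1)-volume of the unit sphere of ℝⁿ, i.e. `n` times the
volume of the unit ball. -/
noncomputable def omegaS (n : ℕ) : ℝ :=
  n * (volume (Metric.ball (0 : EuclideanSpace ℝ (Fin n)) 1)).toReal

/-- `A_κ(t)`: the volume of a geodesic sphere of radius `t` in the model space. -/
noncomputable def AK (n : ℕ) (κ t : ℝ) : ℝ := omegaS n * sinK κ t ^ (n - 1)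

/-- `V_κ(t)`: the volume of a geodesic ball of radius `t` in the model space. -/
noncomputable def VK (n : ℕ) (κ t : ℝ) : ℝ := omegaS n * ∫ s in (0:ℝ)..t, sinK κ s ^ (n - 1)

/-- The natural domain of `V_κ`: `[0, π/√κ)` when `κ > 0` and `[0, ∞)` otherwise. -/
noncomputable def domK (κ : ℝ) : Set ℝ :=
  if 0 < κ then Set.Ico 0 (Real.pi / Real.sqrt κ) else Set.Ici 0

/-- The range of `V_κ` (on its natural domain). -/
noncomputable def rangeVK (n : ℕ) (κ : ℝ) : Set ℝ := VK n κ '' domK κ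

/-- The inverse of `V_κ` on its natural domain. -/
noncomputable def VKinv (n : ℕ) (κ v : ℝ) : ℝ := sInf {t : ℝ | t ∈ domK κ ∧ VK n κ t = v}

/-- The isoperimetric profile `I_κ = A_κ ∘ V_κ⁻¹` of the model space. -/
noncomputable def IK (n : ℕ) (κ v : ℝ) : ℝ := AK n κ (VKinv n κ v)

/-! For `σ > 1` both terms of `g(σ) = |log σ| + log sin_κ(σα)` increase, since `σα` stays in
`[0, π/(2√κ)]`, where `sin_κ` is increasing. For `σ < 1` we have `|log σ| = log σ⁻¹`, and strict
concavity of `sin` on `[0, π]` together with `sin 0 = 0` gives `σ sin_κ(α) < sin_κ(σα)`. -/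

theorem mul_sin_lt_sin_mul {σ x : ℝ} (hσ : 0 < σ) (hσ' : σ < 1) (hx : 0 < x) (hx' : x ≤ π) :
    σ * sin x < sin (σ * x) := by
  simpa using strictConcaveOn_sin_Icc.2 ⟨le_rfl, pi_pos.le⟩ ⟨hx.le, hx'⟩ hx.ne
    (sub_pos.2 hσ') hσ (by ring)

section PositiveCurvature

variable {κ : ℝ} (hκ : 0 < κ)
include hκ

theorem sinK_of_pos (t : ℝ) : sinK κ t = sin (√κ * t) / √κ := if_pos hκ

theorem sinK_pos {t : ℝ} (ht : 0 < t) (ht' : t < π / √κ) : 0 < sinK κ t := by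
  have hs : 0 < √κ := sqrt_pos.2 hκ
  rw [sinK_of_pos hκ]
  exact div_pos (sin_pos_of_pos_of_lt_pi (by positivity) (by rwa [lt_div_iff₀' hs] at ht')) hs

theorem strictMonoOn_sinK :
    StrictMonoOn (sinK κ) (Set.Icc (-(π / (2 * √κ))) (π / (2 * √κ))) := by
  have hs : 0 < √κ := sqrt_pos.2 hκ
  have hmem {t : ℝ} (ht : t ∈ Set.Icc (-(π / (2 * √κ))) (π / (2 * √κ))) :
      √κ * t ∈ Set.Icc (-(π / 2)) (π / 2) := by
    have hbound : √κ * (π / (2 * √κ)) = π / 2 := by field_simp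
    constructor <;> linarith [mul_le_mul_of_nonneg_left ht.1 hs.le,
      mul_le_mul_of_nonneg_left ht.2 hs.le]
  intro s hs' t ht' hst
  simp only [sinK_of_pos hκ]
  exact div_lt_div_of_pos_right (strictMonoOn_sin (hmem hs') (hmem ht')
    (mul_lt_mul_of_pos_left hst hs)) hs

theorem mul_sinK_lt_sinK_mul {σ t : ℝ} (hσ : 0 < σ) (hσ' : σ < 1) (ht : 0 < t)
    (ht' : t ≤ π / √κ) : σ * sinK κ t < sinK κ (σ * t) := by
  have hs : 0 < √κ := sqrt_pos.2 hκ
  rw [sinK_of_pos hκ, sinK_of_pos hκ, mul_left_comm, ← mul_div_assoc]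
  exact div_lt_div_of_pos_right
    (mul_sin_lt_sin_mul hσ hσ' (by positivity) (by rwa [le_div_iff₀' hs] at ht')) hs

end PositiveCurvature

/-- For `κ > 0` and `0 < α < π/(2√κ)`, the function
`g(σ) = |log σ| + log sin_κ(σα)` on `(0, π/(2√κ·α)]` attains a strict global
minimum at `σ = 1`, with `g(1) = log sin_κ(α)`. -/
theorem strict_min_of_general_bound_positive_curvature (κ α : ℝ) (hκ : 0 < κ)
    (hα : 0 < α) (hα' : α < Real.pi / (2 * Real.sqrt κ)) :
    (|Real.log 1| + Real.log (sinK κ (1 * α)) = Real.log (sinK κ α)) ∧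
    ∀ σ ∈ Set.Ioc (0 : ℝ) (Real.pi / (2 * Real.sqrt κ * α)), σ ≠ 1 →
      Real.log (sinK κ α) < |Real.log σ| + Real.log (sinK κ (σ * α)) := by
  have hs : 0 < √κ := sqrt_pos.2 hκ
  have half_lt : π / (2 * √κ) < π / √κ := div_lt_div_of_pos_left pi_pos hs (by linarith)
  have hsinα : 0 < sinK κ α := sinK_pos hκ hα (hα'.trans half_lt)
  refine ⟨by simp, fun σ ⟨hσ, hσα⟩ hσ1 => ?_⟩
  have hσα' : σ * α ≤ π / (2 * √κ) := by
    rw [le_div_iff₀ (by positivity)] at hσα ⊢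
    linarith
  have hsinσα : 0 < sinK κ (σ * α) := sinK_pos hκ (by positivity) (hσα'.trans_lt half_lt)
  rcases hσ1.lt_or_gt with hlt | hgt
  · have concave := mul_sinK_lt_sinK_mul hκ hσ hlt hα (hα'.le.trans half_lt.le)
    rw [abs_of_neg (log_neg hσ hlt), ← log_inv, ← log_mul (by positivity) hsinσα.ne']
    refine log_lt_log hsinα ?_
    rwa [← lt_inv_mul_iff₀ hσ] at concave
  · have bound_pos : 0 < π / (2 * √κ) := by positivity
    have mono : sinK κ α ≤ sinK κ (σ * α) :=
      (strictMonoOn_sinK hκ).monotoneOn ⟨by linarith, hα'.le⟩ ⟨by linarith [mul_pos hσ hα], hσα'⟩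
        (le_mul_of_one_le_left hα.le hgt.le)
    rw [abs_of_pos (log_pos hgt)]
    linarith [log_le_log hsinα mono, log_pos hgt]
end

section
/- Let n ≥ 2, κ, ρ ∈ ℝ, Q ≥ 1 and 0 < β < α, with α < π/√ρ if ρ > 0. Let V : [β, α] → ℝ be a differentiable function taking values in the interior of the range of V_κ, and set r(t) = V_κ⁻¹(V(t)). If V′(t) ≥ I_κ(V(t))^{n/(n−1)} / (Q·ω_{n−1}^{1/(n−1)}·sin_ρ(t)) for every t ∈ [β, α], then tan_κ(r(α)/2) ≥ tan_κ(r(β)/2)·(tan_ρ(α/2)/tan_ρ(β/2))^{1/Q}. -/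
open Real MeasureTheory Filter Asymptotics

/-! Put `r = V_κ⁻¹ ∘ V`, so that `V = V_κ ∘ r` and `V' = A_κ(r) r'`. Since
`I_κ(V)^{n/(n-1)} = ω_{n-1}^{1/(n-1)} sin_κ(r) A_κ(r)`, the hypothesis separates into
`r' / sin_κ(r) ≥ 1 / (Q sin_ρ(t))`. Both sides are logarithmic derivatives of half-angle
tangents: `cos_κ² + κ sin_κ² = 1` and `sin_κ(x) = 2 sin_κ(x/2) cos_κ(x/2)` give
`(log tan_κ(x/2))' = 1 / sin_κ(x)`. Hence `log tan_κ(r(t)/2) - (1/Q) log tan_ρ(t/2)` is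
nondecreasing on `[β, α]`, and comparing its values at `β` and `α` is the claim. -/

theorem hasDerivAt_sinK (κ x : ℝ) : HasDerivAt (sinK κ) (cosK κ x) x := by
  show HasDerivAt (fun t => sinK κ t) _ x
  rcases lt_trichotomy κ 0 with hκ | rfl | hκ
  · have : √(-κ) ≠ 0 := Real.sqrt_ne_zero'.2 (neg_pos.2 hκ)
    simp only [sinK, cosK, if_neg hκ.not_gt, if_pos hκ]
    refine (((hasDerivAt_id' x).const_mul √(-κ)).sinh.div_const √(-κ)).congr_deriv ?_
    field_simp
  · simpa [sinK, cosK] using hasDerivAt_id' x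
  · have : √κ ≠ 0 := Real.sqrt_ne_zero'.2 hκ
    simp only [sinK, cosK, if_pos hκ]
    refine (((hasDerivAt_id' x).const_mul √κ).sin.div_const √κ).congr_deriv ?_
    field_simp

theorem hasDerivAt_cosK (κ x : ℝ) : HasDerivAt (cosK κ) (-κ * sinK κ x) x := by
  show HasDerivAt (fun t => cosK κ t) _ x
  rcases lt_trichotomy κ 0 with hκ | rfl | hκ
  · have h : 0 < -κ := neg_pos.2 hκ
    have : √(-κ) ≠ 0 := Real.sqrt_ne_zero'.2 h
    simp only [sinK, cosK, if_neg hκ.not_gt, if_pos hκ]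
    refine ((hasDerivAt_id' x).const_mul √(-κ)).cosh.congr_deriv ?_
    field_simp
    rw [Real.sq_sqrt h.le]
    ring
  · simpa [sinK, cosK] using hasDerivAt_const x (1 : ℝ)
  · have : √κ ≠ 0 := Real.sqrt_ne_zero'.2 hκ
    simp only [sinK, cosK, if_pos hκ]
    refine ((hasDerivAt_id' x).const_mul √κ).cos.congr_deriv ?_
    field_simp
    rw [Real.sq_sqrt hκ.le]
    ring

theorem cosK_sq_add_mul_sinK_sq (κ x : ℝ) : cosK κ x ^ 2 + κ * sinK κ x ^ 2 = 1 := by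
  rcases lt_trichotomy κ 0 with hκ | rfl | hκ
  · simp only [sinK, cosK, if_neg hκ.not_gt, if_pos hκ]
    rw [div_pow, Real.sq_sqrt (neg_pos.2 hκ).le]
    field_simp [hκ.ne]
    linear_combination Real.cosh_sq_sub_sinh_sq (√(-κ) * x)
  · simp [sinK, cosK]
  · simp only [sinK, cosK, if_pos hκ]
    rw [div_pow, Real.sq_sqrt hκ.le]
    field_simp
    linear_combination Real.cos_sq_add_sin_sq (√κ * x)

theorem sinK_two_mul (κ x : ℝ) : sinK κ (2 * x) = 2 * sinK κ x * cosK κ x := by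
  rcases lt_trichotomy κ 0 with hκ | rfl | hκ
  · simp only [sinK, cosK, if_neg hκ.not_gt, if_pos hκ]
    rw [mul_left_comm, Real.sinh_two_mul]; ring
  · simp [sinK, cosK]
  · simp only [sinK, cosK, if_pos hκ]
    rw [mul_left_comm, Real.sin_two_mul]; ring

theorem mem_domK {κ x : ℝ} : x ∈ domK κ ↔ 0 ≤ x ∧ (0 < κ → x < π / √κ) := by
  unfold domK
  split_ifs with hκ <;> simp [hκ]

theorem mem_interior_domK {κ x : ℝ} :
    x ∈ interior (domK κ) ↔ 0 < x ∧ (0 < κ → x < π / √κ) := by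
  unfold domK
  split_ifs with hκ <;> simp [hκ]

theorem convex_domK (κ : ℝ) : Convex ℝ (domK κ) := by
  unfold domK
  split_ifs
  exacts [convex_Ico _ _, convex_Ici _]

theorem sinK_pos_s15 {κ x : ℝ} (hx : x ∈ interior (domK κ)) : 0 < sinK κ x := by
  obtain ⟨hx0, hxκ⟩ := mem_interior_domK.1 hx
  rcases lt_trichotomy κ 0 with hκ | rfl | hκ
  · simp only [sinK, if_neg hκ.not_gt, if_pos hκ]
    have : 0 < √(-κ) := Real.sqrt_pos.2 (neg_pos.2 hκ)
    exact div_pos (Real.sinh_pos_iff.2 (by positivity)) this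
  · simpa [sinK] using hx0
  · simp only [sinK, if_pos hκ]
    have : 0 < √κ := Real.sqrt_pos.2 hκ
    exact div_pos (Real.sin_pos_of_pos_of_lt_pi (by positivity)
      ((lt_div_iff₀' this).1 (hxκ hκ))) this

theorem half_mem_interior_domK {κ x : ℝ} (hx : x ∈ interior (domK κ)) :
    x / 2 ∈ interior (domK κ) := by
  obtain ⟨hx0, hxκ⟩ := mem_interior_domK.1 hx
  exact mem_interior_domK.2 ⟨by positivity, fun hκ => by linarith [hxκ hκ]⟩

theorem cosK_half_pos {κ x : ℝ} (hx : x ∈ interior (domK κ)) : 0 < cosK κ (x / 2) := by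
  have h := sinK_pos_s15 hx
  rw [← mul_div_cancel₀ x two_ne_zero, sinK_two_mul] at h
  exact pos_of_mul_pos_right h (by linarith [sinK_pos_s15 (half_mem_interior_domK hx)])

theorem tanK_half_pos {κ x : ℝ} (hx : x ∈ interior (domK κ)) : 0 < tanK κ (x / 2) :=
  div_pos (sinK_pos_s15 (half_mem_interior_domK hx)) (cosK_half_pos hx)

theorem hasDerivAt_log_tanK_half {κ x : ℝ} (hx : x ∈ interior (domK κ)) :
    HasDerivAt (fun y => log (tanK κ (y / 2))) (sinK κ x)⁻¹ x := by
  have hs := sinK_pos_s15 (half_mem_interior_domK hx)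
  have hc := cosK_half_pos hx
  have hhalf : HasDerivAt (fun y : ℝ => y / 2) (1 / 2) x := (hasDerivAt_id' x).div_const 2
  have hS : HasDerivAt (fun y => sinK κ (y / 2)) (cosK κ (x / 2) * (1 / 2)) x :=
    ((hasDerivAt_sinK κ (x / 2)).comp x hhalf :)
  have hC : HasDerivAt (fun y => cosK κ (y / 2)) (-κ * sinK κ (x / 2) * (1 / 2)) x :=
    ((hasDerivAt_cosK κ (x / 2)).comp x hhalf :)
  refine ((hS.div hC hc.ne').log (div_pos hs hc).ne').congr_deriv ?_
  have hdouble : sinK κ x = 2 * sinK κ (x / 2) * cosK κ (x / 2) := by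
    rw [← sinK_two_mul, mul_div_cancel₀ x two_ne_zero]
  rw [hdouble, Pi.div_apply]
  field_simp
  linear_combination cosK_sq_add_mul_sinK_sq κ (x / 2)

theorem omegaS_pos {n : ℕ} (hn : 1 ≤ n) : 0 < omegaS n := by
  have : 0 < (volume (Metric.ball (0 : EuclideanSpace ℝ (Fin n)) 1)).toReal :=
    ENNReal.toReal_pos (Metric.measure_ball_pos volume _ one_pos).ne' measure_ball_lt_top.ne
  unfold omegaS
  positivity

theorem AK_pos {n : ℕ} (hn : 1 ≤ n) {κ x : ℝ} (hx : x ∈ interior (domK κ)) : 0 < AK n κ x :=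
  mul_pos (omegaS_pos hn) (pow_pos (sinK_pos_s15 hx) _)

theorem hasStrictDerivAt_VK (n : ℕ) (κ x : ℝ) : HasStrictDerivAt (VK n κ) (AK n κ x) x :=
  have hcont : Continuous (sinK κ) :=
    continuous_iff_continuousAt.2 fun x => (hasDerivAt_sinK κ x).continuousAt
  ((hcont.pow (n - 1)).integral_hasStrictDerivAt 0 x).const_mul (omegaS n)

theorem VK_zero (n : ℕ) (κ : ℝ) : VK n κ 0 = 0 := by
  simp [VK]

theorem VK_strictMonoOn {n : ℕ} (hn : 1 ≤ n) (κ : ℝ) : StrictMonoOn (VK n κ) (domK κ) :=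
  strictMonoOn_of_hasDerivWithinAt_pos (convex_domK κ)
    (fun x _ => (hasStrictDerivAt_VK n κ x).hasDerivAt.continuousAt.continuousWithinAt)
    (fun x _ => (hasStrictDerivAt_VK n κ x).hasDerivAt.hasDerivWithinAt)
    (fun _ hx => AK_pos hn hx)

theorem VKinv_VK {n : ℕ} (hn : 1 ≤ n) {κ x : ℝ} (hx : x ∈ domK κ) : VKinv n κ (VK n κ x) = x := by
  have : {t | t ∈ domK κ ∧ VK n κ t = VK n κ x} = {x} := by
    ext t
    exact ⟨fun ⟨ht, h⟩ => (VK_strictMonoOn hn κ).injOn ht hx h, by rintro rfl; exact ⟨hx, rfl⟩⟩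
  rw [VKinv, this, csInf_singleton]

theorem VKinv_mem_interior_domK {n : ℕ} (hn : 1 ≤ n) {κ v : ℝ}
    (hv : v ∈ interior (rangeVK n κ)) :
    VKinv n κ v ∈ interior (domK κ) ∧ VK n κ (VKinv n κ v) = v := by
  obtain ⟨x, hx, rfl⟩ := interior_subset hv
  have hrange : rangeVK n κ ⊆ Set.Ici 0 := by
    rintro _ ⟨y, hy, rfl⟩
    have h0 : (0 : ℝ) ∈ domK κ := mem_domK.2 ⟨le_rfl, fun hκ => by positivity⟩
    exact VK_zero n κ ▸ (VK_strictMonoOn hn κ).monotoneOn h0 hy (mem_domK.1 hy).1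
  have hpos : 0 < VK n κ x := by simpa using interior_mono hrange hv
  have hx0 : x ≠ 0 := by rintro rfl; exact (VK_zero n κ ▸ hpos).false
  rw [VKinv_VK hn hx]
  exact ⟨mem_interior_domK.2 ⟨(mem_domK.1 hx).1.lt_of_ne' hx0, (mem_domK.1 hx).2⟩, rfl⟩

theorem hasDerivAt_VKinv {n : ℕ} (hn : 1 ≤ n) {κ x : ℝ} (hx : x ∈ interior (domK κ)) :
    HasDerivAt (VKinv n κ) (AK n κ x)⁻¹ (VK n κ x) :=
  have hleft : ∀ᶠ y in nhds x, VKinv n κ (VK n κ y) = y :=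
    (isOpen_interior.eventually_mem hx).mono fun _ hy => VKinv_VK hn (interior_subset hy)
  ((hasStrictDerivAt_VK n κ x).to_local_left_inverse (AK_pos hn hx).ne' hleft).hasDerivAt

theorem AK_rpow_eq_mul_sinK_mul_AK {n : ℕ} (hn : 2 ≤ n) {κ x : ℝ} (hx : x ∈ interior (domK κ)) :
    AK n κ x ^ ((n : ℝ) / ((n : ℝ) - 1)) =
      omegaS n ^ ((1 : ℝ) / ((n : ℝ) - 1)) * sinK κ x * AK n κ x := by
  have hn' : (n : ℝ) - 1 ≠ 0 := by
    have : (2 : ℝ) ≤ n := by exact_mod_cast hn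
    linarith
  have hω := omegaS_pos (n := n) (by omega)
  have hs := sinK_pos_s15 hx
  have hexp : (n : ℝ) / ((n : ℝ) - 1) = 1 / ((n : ℝ) - 1) + 1 := by field_simp; ring
  rw [hexp, Real.rpow_add (AK_pos (by omega) hx), Real.rpow_one, AK,
    Real.mul_rpow hω.le (by positivity), ← Real.rpow_natCast, ← Real.rpow_mul hs.le,
    Nat.cast_sub (by omega), Nat.cast_one, mul_one_div_cancel hn', Real.rpow_one]

theorem mul_rpow_div_le_of_log_sub_le {a b c d p : ℝ} (ha : 0 < a) (hb : 0 < b) (hc : 0 < c)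
    (hd : 0 < d) (h : log a - p * log c ≤ log b - p * log d) : a * (d / c) ^ p ≤ b := by
  have hq := rpow_pos_of_pos (div_pos hd hc) p
  rw [← log_le_log_iff (mul_pos ha hq) hb, log_mul ha.ne' hq.ne',
    log_rpow (div_pos hd hc), log_div hd.ne' hc.ne']
  linarith

theorem tanK_half_mul_rpow_le_of_hasDerivAt {κ ρ p α β : ℝ} {r r' : ℝ → ℝ} (hβα : β ≤ α)
    (hr : ∀ t ∈ Set.Icc β α, HasDerivAt r (r' t) t)
    (hr_mem : ∀ t ∈ Set.Icc β α, r t ∈ interior (domK κ))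
    (ht_mem : ∀ t ∈ Set.Icc β α, t ∈ interior (domK ρ))
    (hle : ∀ t ∈ Set.Icc β α, p * (sinK ρ t)⁻¹ ≤ (sinK κ (r t))⁻¹ * r' t) :
    tanK κ (r β / 2) * (tanK ρ (α / 2) / tanK ρ (β / 2)) ^ p ≤ tanK κ (r α / 2) := by
  have hderiv : ∀ t ∈ Set.Icc β α, HasDerivAt
      (fun t => log (tanK κ (r t / 2)) - p * log (tanK ρ (t / 2)))
      ((sinK κ (r t))⁻¹ * r' t - p * (sinK ρ t)⁻¹) t := fun t ht =>
    ((hasDerivAt_log_tanK_half (hr_mem t ht)).comp t (hr t ht)).sub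
      ((hasDerivAt_log_tanK_half (ht_mem t ht)).const_mul p)
  have hmono := monotoneOn_of_hasDerivWithinAt_nonneg (convex_Icc β α)
    (fun t ht => (hderiv t ht).continuousAt.continuousWithinAt)
    (fun t ht => (hderiv t (interior_subset ht)).hasDerivWithinAt)
    (fun t ht => sub_nonneg.2 (hle t (interior_subset ht)))
  have hβ : β ∈ Set.Icc β α := ⟨le_rfl, hβα⟩
  have hα : α ∈ Set.Icc β α := ⟨hβα, le_rfl⟩
  exact mul_rpow_div_le_of_log_sub_le (tanK_half_pos (hr_mem β hβ)) (tanK_half_pos (hr_mem α hα))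
    (tanK_half_pos (ht_mem β hβ)) (tanK_half_pos (ht_mem α hα)) (hmono hβ hα hβα)

theorem one_div_mul_inv_le_of_AK_rpow_div_le {n : ℕ} (hn : 2 ≤ n) {κ Q σ s w : ℝ}
    (hQ : 0 < Q) (hσ : 0 < σ) (hs : s ∈ interior (domK κ))
    (h : AK n κ s ^ ((n : ℝ) / ((n : ℝ) - 1)) /
      (Q * omegaS n ^ ((1 : ℝ) / ((n : ℝ) - 1)) * σ) ≤ w) :
    1 / Q * σ⁻¹ ≤ (sinK κ s)⁻¹ * ((AK n κ s)⁻¹ * w) := by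
  have hA := AK_pos (n := n) (by omega) hs
  have hS := sinK_pos_s15 hs
  have hω := Real.rpow_pos_of_pos (omegaS_pos (n := n) (by omega)) ((1 : ℝ) / ((n : ℝ) - 1))
  rw [AK_rpow_eq_mul_sinK_mul_AK hn hs] at h
  calc 1 / Q * σ⁻¹
      = (sinK κ s)⁻¹ * ((AK n κ s)⁻¹ * (omegaS n ^ ((1 : ℝ) / ((n : ℝ) - 1)) * sinK κ s *
          AK n κ s / (Q * omegaS n ^ ((1 : ℝ) / ((n : ℝ) - 1)) * σ))) := by
        field_simp
    _ ≤ (sinK κ s)⁻¹ * ((AK n κ s)⁻¹ * w) := by gcongr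

/-- Integrated form of the main quasiconformal differential inequality.
Let `n ≥ 2`, `Q ≥ 1`, `0 < β < α` (with `α < π/√ρ` if `ρ > 0`), and let
`V : [β,α] → ℝ` be differentiable with values in the interior of the range of
`V_κ`; set `r(t) = V_κ⁻¹(V(t))`.  If
`V'(t) ≥ I_κ(V(t))^{n/(n-1)} / (Q·ω_{n-1}^{1/(n-1)}·sin_ρ(t))` on `[β,α]`, then
`tan_κ(r(α)/2) ≥ tan_κ(r(β)/2)·(tan_ρ(α/2)/tan_ρ(β/2))^{1/Q}`. -/
theorem main_quasiconformal_inequality_integrated (n : ℕ) (hn : 2 ≤ n)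
    (κ ρ Q α β : ℝ) (hQ : 1 ≤ Q) (hβ : 0 < β) (hβα : β < α)
    (hα : 0 < ρ → α < Real.pi / Real.sqrt ρ)
    (V V' : ℝ → ℝ)
    (hV : ∀ t ∈ Set.Icc β α, HasDerivAt V (V' t) t)
    (hVmem : ∀ t ∈ Set.Icc β α, V t ∈ interior (rangeVK n κ))
    (hineq : ∀ t ∈ Set.Icc β α,
      IK n κ (V t) ^ ((n : ℝ) / ((n : ℝ) - 1)) /
        (Q * omegaS n ^ ((1 : ℝ) / ((n : ℝ) - 1)) * sinK ρ t) ≤ V' t) :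
    tanK κ (VKinv n κ (V β) / 2) *
        (tanK ρ (α / 2) / tanK ρ (β / 2)) ^ ((1 : ℝ) / Q)
      ≤ tanK κ (VKinv n κ (V α) / 2) := by
  have hn1 : 1 ≤ n := by omega
  set r : ℝ → ℝ := fun t => VKinv n κ (V t)
  have hr : ∀ t ∈ Set.Icc β α, r t ∈ interior (domK κ) ∧ VK n κ (r t) = V t :=
    fun t ht => VKinv_mem_interior_domK hn1 (hVmem t ht)
  have ht : ∀ t ∈ Set.Icc β α, t ∈ interior (domK ρ) := fun t ht =>
    mem_interior_domK.2 ⟨hβ.trans_le ht.1, fun hρ => ht.2.trans_lt (hα hρ)⟩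
  have hr_deriv : ∀ t ∈ Set.Icc β α, HasDerivAt r ((AK n κ (r t))⁻¹ * V' t) t := by
    intro t htI
    have hVKinv := hasDerivAt_VKinv hn1 (hr t htI).1
    rw [(hr t htI).2] at hVKinv
    exact hVKinv.comp t (hV t htI)
  exact tanK_half_mul_rpow_le_of_hasDerivAt (r := r) hβα.le hr_deriv (fun t htI => (hr t htI).1) ht
    fun t htI => one_div_mul_inv_le_of_AK_rpow_div_le hn (by linarith) (sinK_pos_s15 (ht t htI))
      (hr t htI).1 (hineq t htI)
end
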